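/- arXiv:2202.07789 — 6 statements merged into one kernel-verified Lean document; each statement's English description precedes it below -/
import Mathlib

section
/- Let S and A be nonempty types, r̃ : S × A → ℝ any reward function, T̂ : S × A → Set S a set-valued model with T̂(s,a) nonempty for every (s,a), and γ ∈ [0,1). If Q, Q' : S × A → ℝ are bounded functions with |Q(s,a) − Q'(s,a)| ≤ d for all (s,a), then for all (s,a), |(B̲Q)(s,a) − (B̲Q')(s,a)| ≤ γ·d. (That is, the Bellmin operator is a γ-contraction in the supremum norm.) -/
/-!
Over `ℝ`, both `⨆` and `⨅` are `1`-Lipschitz for the uniform distance between families, so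
`s ↦ ⨆ a', Q (s, a')` and then its infimum over `T̂(s, a)` move by at most `d` when `Q` moves by
at most `d`; the affine map `x ↦ r̃(s, a) + γ x` scales this by `γ`.
-/

/-- The Bellmin operator: `(B̲Q)(s,a) = r̃(s,a) + γ · inf_{s' ∈ T̂(s,a)} sup_{a' ∈ A} Q(s',a')`. -/
noncomputable def bellmin {S A : Type*} (rt : S × A → ℝ) (That : S × A → Set S)
    (γ : ℝ) (Q : S × A → ℝ) : S × A → ℝ :=
  fun p => rt p + γ * ⨅ s' : That p, ⨆ a' : A, Q (s'.1, a')

open Set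

namespace Real

variable {ι : Type*}

theorem iInf_eq_neg_iSup_neg (f : ι → ℝ) : ⨅ i, f i = -⨆ i, -f i := by
  rw [iInf, iSup, sInf_def, neg_range]

theorem bddAbove_range_of_le_add {f g : ι → ℝ} {d : ℝ} (hg : BddAbove (range g))
    (h : ∀ i, f i ≤ g i + d) : BddAbove (range f) := by
  obtain ⟨b, hb⟩ := hg
  exact ⟨b + d, forall_mem_range.2 fun i => (h i).trans (by gcongr; exact hb (mem_range_self i))⟩

theorem iSup_le_iSup_add {f g : ι → ℝ} {d : ℝ} (hd : 0 ≤ d) (hg : BddAbove (range g))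
    (h : ∀ i, f i ≤ g i + d) : ⨆ i, f i ≤ (⨆ i, g i) + d := by
  cases isEmpty_or_nonempty ι
  · simpa using hd
  · exact ciSup_le fun i => (h i).trans (by gcongr; exact le_ciSup hg i)

theorem abs_iSup_sub_iSup_le {f g : ι → ℝ} {d : ℝ} (hd : 0 ≤ d) (h : ∀ i, |f i - g i| ≤ d) :
    |(⨆ i, f i) - ⨆ i, g i| ≤ d := by
  have hfg : ∀ i, f i ≤ g i + d := fun i => by linarith [(abs_sub_le_iff.1 (h i)).1]
  have hgf : ∀ i, g i ≤ f i + d := fun i => by linarith [(abs_sub_le_iff.1 (h i)).2]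
  by_cases hf : BddAbove (range f)
  · have hg := bddAbove_range_of_le_add hf hgf
    exact abs_sub_le_iff.2
      ⟨by linarith [iSup_le_iSup_add hd hg hfg], by linarith [iSup_le_iSup_add hd hf hgf]⟩
  · -- both suprema take the junk value `0`
    have hg : ¬BddAbove (range g) := fun hg => hf (bddAbove_range_of_le_add hg hfg)
    simpa [iSup_of_not_bddAbove hf, iSup_of_not_bddAbove hg] using hd

theorem abs_iInf_sub_iInf_le {f g : ι → ℝ} {d : ℝ} (hd : 0 ≤ d) (h : ∀ i, |f i - g i| ≤ d) :
    |(⨅ i, f i) - ⨅ i, g i| ≤ d := by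
  rw [iInf_eq_neg_iSup_neg f, iInf_eq_neg_iSup_neg g, neg_sub_neg, abs_sub_comm]
  exact abs_iSup_sub_iSup_le hd fun i => by rw [neg_sub_neg, abs_sub_comm]; exact h i

end Real

theorem bellmin_contraction_general {S A : Type*}
    (rt : S × A → ℝ) (That : S × A → Set S)
    (γ : ℝ) (hγ0 : 0 ≤ γ)
    (Q Q' : S × A → ℝ)
    (d : ℝ) (hd : ∀ p, |Q p - Q' p| ≤ d) :
    ∀ p, |bellmin rt That γ Q p - bellmin rt That γ Q' p| ≤ γ * d := by
  intro p
  have hd0 : 0 ≤ d := (abs_nonneg _).trans (hd p)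
  have hinf : |(⨅ s' : That p, ⨆ a' : A, Q (s'.1, a')) - ⨅ s' : That p, ⨆ a' : A, Q' (s'.1, a')|
      ≤ d :=
    Real.abs_iInf_sub_iInf_le hd0 fun _ => Real.abs_iSup_sub_iSup_le hd0 fun _ => hd _
  simp only [bellmin]
  rw [add_sub_add_left_eq_sub, ← mul_sub, abs_mul, abs_of_nonneg hγ0]
  exact mul_le_mul_of_nonneg_left hinf hγ0

/-- The Bellmin operator is a `γ`-contraction in the supremum norm. -/
theorem bellmin_contraction {S A : Type*} [Nonempty S] [Nonempty A]
    (rt : S × A → ℝ) (That : S × A → Set S) (hT : ∀ p, (That p).Nonempty)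
    (γ : ℝ) (hγ0 : 0 ≤ γ) (hγ1 : γ < 1)
    (Q Q' : S × A → ℝ) (M M' : ℝ)
    (hQ : ∀ p, |Q p| ≤ M) (hQ' : ∀ p, |Q' p| ≤ M')
    (d : ℝ) (hd : ∀ p, |Q p - Q' p| ≤ d) :
    ∀ p, |bellmin rt That γ Q p - bellmin rt That γ Q' p| ≤ γ * d :=
  bellmin_contraction_general rt That γ hγ0 Q Q' d hd
end

section
/- Let S and A be nonempty types, r̃ : S × A → ℝ, T : S × A → S a deterministic transition function, T̂ : S × A → Set S with T̂(s,a) nonempty for all (s,a), and γ ∈ [0,1). Assume T̂ is calibrated, i.e., T(s,a) ∈ T̂(s,a) for all (s,a). If Q, Q' : S × A → ℝ are bounded functions with Q(s,a) ≤ Q'(s,a) for all (s,a), then (B̲Q)(s,a) ≤ (B̃Q')(s,a) for all (s,a). -/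
/-- The Bellman operator with true dynamics:
`(B̃Q)(s,a) = r̃(s,a) + γ · sup_{a' ∈ A} Q(T(s,a),a')`. -/
noncomputable def bellman {S A : Type*} (rt : S × A → ℝ) (T : S × A → S)
    (γ : ℝ) (Q : S × A → ℝ) : S × A → ℝ :=
  fun p => rt p + γ * ⨆ a' : A, Q (T p, a')

open Set

lemma bddBelow_range_iSup_of_abs_le {ι κ : Type*} [Nonempty κ] {f : ι → κ → ℝ} {M : ℝ}
    (hf : ∀ i j, |f i j| ≤ M) : BddBelow (range fun i => ⨆ j, f i j) := by
  obtain ⟨j⟩ := ‹Nonempty κ›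
  refine ⟨-M, forall_mem_range.2 fun i => ?_⟩
  have hbdd : BddAbove (range (f i)) := ⟨M, forall_mem_range.2 fun j => le_of_abs_le (hf i j)⟩
  exact le_ciSup_of_le hbdd j (neg_le_of_abs_le (hf i j))

section Operators

variable {S A : Type*} (rt : S × A → ℝ) {γ : ℝ}

lemma bellmin_le_bellman_of_calibrated (hγ : 0 ≤ γ) {T : S × A → S} {That : S × A → Set S}
    (hcal : ∀ p, T p ∈ That p) {Q : S × A → ℝ}
    (hQ : BddBelow (range fun s => ⨆ a, Q (s, a))) (p : S × A) :
    bellmin rt That γ Q p ≤ bellman rt T γ Q p := by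
  have hQp : BddBelow (range fun s' : That p => ⨆ a, Q (s'.1, a)) :=
    hQ.mono (range_comp_subset_range Subtype.val fun s => ⨆ a, Q (s, a))
  exact add_le_add_right (mul_le_mul_of_nonneg_left (ciInf_le hQp ⟨T p, hcal p⟩) hγ) _

lemma bellman_mono (hγ : 0 ≤ γ) (T : S × A → S) {Q Q' : S × A → ℝ}
    (hQ' : ∀ s, BddAbove (range fun a => Q' (s, a))) (hle : Q ≤ Q') (p : S × A) :
    bellman rt T γ Q p ≤ bellman rt T γ Q' p :=
  add_le_add_right (mul_le_mul_of_nonneg_left (ciSup_mono (hQ' _) fun _ => hle _) hγ) _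

end Operators

theorem bellmin_le_bellman_general {S A : Type*} [Nonempty A]
    (rt : S × A → ℝ) (T : S × A → S) (That : S × A → Set S)
    (γ : ℝ) (hγ0 : 0 ≤ γ)
    (hcal : ∀ p, T p ∈ That p)
    (Q Q' : S × A → ℝ) (M M' : ℝ)
    (hQ : ∀ p, |Q p| ≤ M) (hQ' : ∀ p, |Q' p| ≤ M')
    (hle : ∀ p, Q p ≤ Q' p) :
    ∀ p, bellmin rt That γ Q p ≤ bellman rt T γ Q' p := by
  intro p
  have hQ'_bdd : ∀ s, BddAbove (range fun a => Q' (s, a)) :=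
    fun s => ⟨M', forall_mem_range.2 fun a => le_of_abs_le (hQ' _)⟩
  calc bellmin rt That γ Q p ≤ bellman rt T γ Q p :=
        bellmin_le_bellman_of_calibrated rt hγ0 hcal (bddBelow_range_iSup_of_abs_le fun s a => hQ (s, a)) p
    _ ≤ bellman rt T γ Q' p := bellman_mono rt hγ0 T hQ'_bdd hle p

/-- If `T̂` is calibrated and `Q ≤ Q'` pointwise, then `B̲Q ≤ B̃Q'` pointwise. -/
theorem bellmin_le_bellman {S A : Type*} [Nonempty S] [Nonempty A]
    (rt : S × A → ℝ) (T : S × A → S) (That : S × A → Set S)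
    (hT : ∀ p, (That p).Nonempty)
    (γ : ℝ) (hγ0 : 0 ≤ γ) (hγ1 : γ < 1)
    (hcal : ∀ p, T p ∈ That p)
    (Q Q' : S × A → ℝ) (M M' : ℝ)
    (hQ : ∀ p, |Q p| ≤ M) (hQ' : ∀ p, |Q' p| ≤ M')
    (hle : ∀ p, Q p ≤ Q' p) :
    ∀ p, bellmin rt That γ Q p ≤ bellman rt T γ Q' p :=
  bellmin_le_bellman_general rt T That γ hγ0 hcal Q Q' M M' hQ hQ' hle
end

section
/- Trajectory-level version of the reward-penalty lemma: let γ ∈ (0,1), H ≥ 1 a natural number, and r_min, r_max, C real numbers with r_min ≤ r_max and C > (r_max − r_min)/γᴴ − r_max. Let r : ℕ → ℝ be a sequence for which there exists t̄ ≤ H with r_min ≤ r_t ≤ r_max for all t < t̄ and r_t = −C for all t ≥ t̄ (an unsafe trajectory), and let r' : ℕ → ℝ satisfy r_min ≤ r'_t ≤ r_max for all t (a safe trajectory). Then ∑_{t=0}^{∞} γᵗ·r_t < ∑_{t=0}^{∞} γᵗ·r'_t. -/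
/-!
Bound the unsafe rewards above by `r_max` before `t̄` and the safe rewards below by `r_min`.
Both bounds are explicit geometric series, and after multiplying by `1 - γ` the comparison
becomes `r_max - r_min < γ^t̄ (r_max + C)`, which is the hypothesis on `C` since `γ^H ≤ γ^t̄`.
-/

open Finset

section DiscountedSum

variable {γ : ℝ}

theorem summable_geometric_mul_of_eventually_abs_le (hγ0 : 0 ≤ γ) (hγ1 : γ < 1)
    {f : ℕ → ℝ} {M : ℝ} (hf : ∀ᶠ t in Filter.atTop, |f t| ≤ M) :
    Summable fun t => γ ^ t * f t :=
  .of_norm_bounded_eventually_nat ((summable_geometric_of_lt_one hγ0 hγ1).mul_right M) <|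
    hf.mono fun t ht => by
      rw [norm_mul, norm_pow, Real.norm_eq_abs, Real.norm_eq_abs, abs_of_nonneg hγ0]
      exact mul_le_mul_of_nonneg_left ht (pow_nonneg hγ0 t)

theorem summable_geometric_mul_ite (hγ0 : 0 ≤ γ) (hγ1 : γ < 1) (n : ℕ) (a b : ℝ) :
    Summable fun t => γ ^ t * (if t < n then a else b) :=
  summable_geometric_mul_of_eventually_abs_le hγ0 hγ1 (M := |b|) <|
    Filter.eventually_atTop.2 ⟨n, fun t ht => by rw [if_neg (not_lt.2 ht)]⟩

theorem tsum_geometric_mul_ite (hγ0 : 0 ≤ γ) (hγ1 : γ < 1) (n : ℕ) (a b : ℝ) :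
    ∑' t, γ ^ t * (if t < n then a else b) = (a * (1 - γ ^ n) + b * γ ^ n) / (1 - γ) := by
  have head : ∑ t ∈ range n, γ ^ t * (if t < n then a else b) = a * (1 - γ ^ n) / (1 - γ) := by
    have hγ : 1 - γ ≠ 0 := by linarith
    have hγ' : γ - 1 ≠ 0 := by linarith
    rw [sum_congr rfl fun t ht => by rw [if_pos (mem_range.1 ht)], ← sum_mul,
      geom_sum_eq hγ1.ne n]
    field_simp
    ring
  have tail : ∑' t, γ ^ (t + n) * (if t + n < n then a else b) = b * γ ^ n / (1 - γ) := by
    have term (t : ℕ) : γ ^ (t + n) * (if t + n < n then a else b) = b * γ ^ n * γ ^ t := by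
      rw [if_neg (by omega), pow_add]
      ring
    rw [tsum_congr term, tsum_mul_left, tsum_geometric_of_lt_one hγ0 hγ1, div_eq_mul_inv]
  rw [← (summable_geometric_mul_ite hγ0 hγ1 n a b).sum_add_tsum_nat_add n, head, tail]
  ring

end DiscountedSum

theorem sub_lt_pow_mul_add_of_lt_div_pow {γ C rmin rmax : ℝ} (hγ0 : 0 < γ) (hγ1 : γ ≤ 1)
    {n H : ℕ} (hnH : n ≤ H) (hminmax : rmin ≤ rmax) (hC : C > (rmax - rmin) / γ ^ H - rmax) :
    rmax - rmin < γ ^ n * (rmax + C) := by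
  have hH : rmax - rmin < γ ^ H * (rmax + C) := by
    rw [mul_comm, ← div_lt_iff₀ (pow_pos hγ0 H)]
    linarith
  have hpos : 0 < rmax + C := pos_of_mul_pos_right (by linarith) (pow_pos hγ0 H).le
  calc rmax - rmin < γ ^ H * (rmax + C) := hH
    _ ≤ γ ^ n * (rmax + C) :=
        mul_le_mul_of_nonneg_right (pow_le_pow_of_le_one hγ0.le hγ1 hnH) hpos.le

theorem unsafe_return_lt_safe_return_general (γ : ℝ) (hγ0 : 0 < γ) (hγ1 : γ < 1)
    (H : ℕ) (rmin rmax C : ℝ) (hminmax : rmin ≤ rmax)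
    (hC : C > (rmax - rmin) / γ ^ H - rmax)
    (r : ℕ → ℝ)
    (hr : ∃ tbar ≤ H, (∀ t < tbar, rmin ≤ r t ∧ r t ≤ rmax) ∧ ∀ t ≥ tbar, r t = -C)
    (r' : ℕ → ℝ) (hr' : ∀ t, rmin ≤ r' t ∧ r' t ≤ rmax) :
    (∑' t : ℕ, γ ^ t * r t) < ∑' t : ℕ, γ ^ t * r' t := by
  obtain ⟨tbar, htbar, hhead, htail⟩ := hr
  have hr_le : ∀ t, γ ^ t * r t ≤ γ ^ t * (if t < tbar then rmax else -C) := fun t => by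
    gcongr
    split_ifs with ht
    exacts [(hhead t ht).2, (htail t (not_lt.1 ht)).le]
  have hr_summable : Summable fun t => γ ^ t * r t :=
    summable_geometric_mul_of_eventually_abs_le hγ0.le hγ1 (M := |-C|) <|
      Filter.eventually_atTop.2 ⟨tbar, fun t ht => by rw [htail t ht]⟩
  have hr'_summable : Summable fun t => γ ^ t * r' t :=
    summable_geometric_mul_of_eventually_abs_le hγ0.le hγ1 <|
      .of_forall fun t => abs_le_max_abs_abs (hr' t).1 (hr' t).2
  have hkey := sub_lt_pow_mul_add_of_lt_div_pow hγ0 hγ1.le htbar hminmax hC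
  calc ∑' t, γ ^ t * r t ≤ ∑' t, γ ^ t * (if t < tbar then rmax else -C) :=
        hr_summable.tsum_le_tsum hr_le (summable_geometric_mul_ite hγ0.le hγ1 tbar _ _)
    _ = (rmax * (1 - γ ^ tbar) + -C * γ ^ tbar) / (1 - γ) := tsum_geometric_mul_ite hγ0.le hγ1 ..
    _ < rmin / (1 - γ) := by gcongr; linarith
    _ = ∑' t, γ ^ t * rmin := by
        rw [tsum_mul_right, tsum_geometric_of_lt_one hγ0.le hγ1, div_eq_inv_mul]
    _ ≤ ∑' t, γ ^ t * r' t :=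
        ((summable_geometric_of_lt_one hγ0.le hγ1).mul_right rmin).tsum_le_tsum
          (fun t => by gcongr; exact (hr' t).1) hr'_summable

/-- Trajectory-level reward-penalty lemma: with `C > (r_max − r_min)/γᴴ − r_max`, any unsafe
trajectory (rewards in `[r_min, r_max]` before some step `t̄ ≤ H` and `−C` thereafter) has
strictly smaller discounted return than any safe trajectory (rewards in `[r_min, r_max]`
forever). -/
theorem unsafe_return_lt_safe_return (γ : ℝ) (hγ0 : 0 < γ) (hγ1 : γ < 1)
    (H : ℕ) (hH : 1 ≤ H) (rmin rmax C : ℝ) (hminmax : rmin ≤ rmax)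
    (hC : C > (rmax - rmin) / γ ^ H - rmax)
    (r : ℕ → ℝ)
    (hr : ∃ tbar ≤ H, (∀ t < tbar, rmin ≤ r t ∧ r t ≤ rmax) ∧ ∀ t ≥ tbar, r t = -C)
    (r' : ℕ → ℝ) (hr' : ∀ t, rmin ≤ r' t ∧ r' t ≤ rmax) :
    (∑' t : ℕ, γ ^ t * r t) < ∑' t : ℕ, γ ^ t * r' t :=
  unsafe_return_lt_safe_return_general γ hγ0 hγ1 H rmin rmax C hminmax hC r hr r' hr'
end

section
/- Core comparison argument of the main safety theorem: let γ ∈ (0,1), H ≥ 1 a natural number, and r_min, r_max, C real numbers with C > (r_max − r_min)/γᴴ − r_max. Let Q̲, Q̃ : X → ℝ be functions on a type X with Q̲(x) ≤ Q̃(x) for all x. Suppose x' ∈ X satisfies Q̃(x') ≤ (r_max·(1 − γᴴ) − C·γᴴ)/(1 − γ) and x ∈ X satisfies Q̲(x) ≥ r_min/(1 − γ). Then Q̲(x) > Q̲(x'). -/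
lemma mul_one_sub_sub_mul_lt_of_div_sub_lt {p a b C : ℝ} (hp : 0 < p)
    (hC : (a - b) / p - a < C) : a * (1 - p) - C * p < b := by
  have h : a - b < (C + a) * p := (div_lt_iff₀ hp).mp (by linarith)
  linarith

theorem safe_action_q_gt_unsafe_general {X : Type*} (γ : ℝ) (hγ0 : 0 < γ) (hγ1 : γ < 1)
    (H : ℕ) (rmin rmax C : ℝ)
    (hC : C > (rmax - rmin) / γ ^ H - rmax)
    (Qlow Qtil : X → ℝ) (hle : ∀ x, Qlow x ≤ Qtil x)
    (x' : X) (hx' : Qtil x' ≤ (rmax * (1 - γ ^ H) - C * γ ^ H) / (1 - γ))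
    (x : X) (hx : Qlow x ≥ rmin / (1 - γ)) :
    Qlow x > Qlow x' := by
  have hthreshold := mul_one_sub_sub_mul_lt_of_div_sub_lt (pow_pos hγ0 H) hC
  calc Qlow x' ≤ Qtil x' := hle x'
    _ ≤ (rmax * (1 - γ ^ H) - C * γ ^ H) / (1 - γ) := hx'
    _ < rmin / (1 - γ) := div_lt_div_of_pos_right hthreshold (sub_pos.mpr hγ1)
    _ ≤ Qlow x := hx

/-- Core comparison argument of the main safety theorem: if `Q̲ ≤ Q̃` pointwise, `x'` is an
unsafe action (`Q̃(x') ≤ (r_max·(1 − γᴴ) − C·γᴴ)/(1 − γ)`) and `x` is a certified safe action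
(`Q̲(x) ≥ r_min/(1 − γ)`), then `Q̲(x) > Q̲(x')` whenever `C > (r_max − r_min)/γᴴ − r_max`. -/
theorem safe_action_q_gt_unsafe {X : Type*} (γ : ℝ) (hγ0 : 0 < γ) (hγ1 : γ < 1)
    (H : ℕ) (hH : 1 ≤ H) (rmin rmax C : ℝ)
    (hC : C > (rmax - rmin) / γ ^ H - rmax)
    (Qlow Qtil : X → ℝ) (hle : ∀ x, Qlow x ≤ Qtil x)
    (x' : X) (hx' : Qtil x' ≤ (rmax * (1 - γ ^ H) - C * γ ^ H) / (1 - γ))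
    (x : X) (hx : Qlow x ≥ rmin / (1 - γ)) :
    Qlow x > Qlow x' :=
  safe_action_q_gt_unsafe_general γ hγ0 hγ1 H rmin rmax C hC Qlow Qtil hle x' hx' x hx
end

section
/- Stochastic extension, first inequality: let γ ∈ (0,1), H a natural number, p, q, r_min, r_max, C real numbers with 0 ≤ p, q·γᴴ > p. If C > (r_max·(1 − q·γᴴ) − (1 − p)·r_min)/(q·γᴴ − p), then (−p·C + (1 − p)·r_min)/(1 − γ) > q·R_C + (1 − q)·r_max/(1 − γ), where R_C := (r_max·(1 − γᴴ) − C·γᴴ)/(1 − γ). -/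
theorem stochastic_first_inequality_general (γ : ℝ) (hγ1 : γ < 1)
    (H : ℕ) (p q rmin rmax C : ℝ) (hqγ : q * γ ^ H > p)
    (hC : C > (rmax * (1 - q * γ ^ H) - (1 - p) * rmin) / (q * γ ^ H - p)) :
    (-p * C + (1 - p) * rmin) / (1 - γ)
      > q * ((rmax * (1 - γ ^ H) - C * γ ^ H) / (1 - γ)) + (1 - q) * rmax / (1 - γ) := by
  have hγ : 0 < 1 - γ := sub_pos.mpr hγ1
  have hgap : 0 < q * γ ^ H - p := sub_pos.mpr hqγ
  rw [gt_iff_lt, div_lt_iff₀ hgap] at hC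
  -- After clearing the common denominator `1 - γ`, the claim is `hC` rearranged.
  have hnum : q * (rmax * (1 - γ ^ H) - C * γ ^ H) + (1 - q) * rmax < -p * C + (1 - p) * rmin := by
    linarith
  rw [gt_iff_lt, mul_div_assoc', ← add_div, div_lt_div_iff_of_pos_right hγ]
  exact hnum

/-- Stochastic extension, first inequality: if `C > α₁`, then
`(−p·C + (1 − p)·r_min)/(1 − γ) > q·R_C + (1 − q)·r_max/(1 − γ)`. -/
theorem stochastic_first_inequality (γ : ℝ) (hγ0 : 0 < γ) (hγ1 : γ < 1)
    (H : ℕ) (p q rmin rmax C : ℝ) (hp : 0 ≤ p) (hqγ : q * γ ^ H > p)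
    (hC : C > (rmax * (1 - q * γ ^ H) - (1 - p) * rmin) / (q * γ ^ H - p)) :
    (-p * C + (1 - p) * rmin) / (1 - γ)
      > q * ((rmax * (1 - γ ^ H) - C * γ ^ H) / (1 - γ)) + (1 - q) * rmax / (1 - γ) :=
  stochastic_first_inequality_general γ hγ1 H p q rmin rmax C hqγ hC
end

section
/- Stochastic extension, combined condition: let γ ∈ (0,1), H a natural number, p, q, r_min, r_max, C real numbers with 0 ≤ p and q·γᴴ > p (which also implies γᴴ > p since q ≤ 1, assuming 0 ≤ q ≤ 1). Set α₁ := (r_max·(1 − q·γᴴ) − (1 − p)·r_min)/(q·γᴴ − p) and α₂ := (r_max·(2 − q − γᴴ) − (1 − p)·r_min)/(γᴴ − p). If C > max{α₁, α₂, 0}, then both (−p·C + (1 − p)·r_min)/(1 − γ) > q·R_C + (1 − q)·r_max/(1 − γ) and (−p·C + (1 − p)·r_min)/(1 − γ) > R_C + (1 − q)·r_max/(1 − γ) hold, where R_C := (r_max·(1 − γᴴ) − C·γᴴ)/(1 − γ). -/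
/-!
Multiplied by `1 - γ > 0`, each inequality says that `C` times `q γᴴ - p`, resp. `γᴴ - p`, exceeds
the numerator of `α₁`, resp. `α₂`. Both coefficients are positive (`γᴴ ≥ q γᴴ > p` as `q ≤ 1`),
so this is `C > α₁`, resp. `C > α₂`, with the denominator cleared.
-/

theorem safe_value_gt_mixed_of_penalty_gt {γ g p q rmin rmax C : ℝ} (hγ1 : γ < 1)
    (hpg : p < q * g) (hC : (rmax * (1 - q * g) - (1 - p) * rmin) / (q * g - p) < C) :
    (-p * C + (1 - p) * rmin) / (1 - γ)
      > q * ((rmax * (1 - g) - C * g) / (1 - γ)) + (1 - q) * rmax / (1 - γ) := by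
  have hcleared := (div_lt_iff₀ (sub_pos.2 hpg)).1 hC
  rw [mul_div_assoc', ← add_div, gt_iff_lt, div_lt_div_iff_of_pos_right (sub_pos.2 hγ1)]
  linarith

theorem safe_value_gt_unsafe_of_penalty_gt {γ g p q rmin rmax C : ℝ} (hγ1 : γ < 1)
    (hpg : p < g) (hC : (rmax * (2 - q - g) - (1 - p) * rmin) / (g - p) < C) :
    (-p * C + (1 - p) * rmin) / (1 - γ)
      > (rmax * (1 - g) - C * g) / (1 - γ) + (1 - q) * rmax / (1 - γ) := by
  have hcleared := (div_lt_iff₀ (sub_pos.2 hpg)).1 hC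
  rw [← add_div, gt_iff_lt, div_lt_div_iff_of_pos_right (sub_pos.2 hγ1)]
  linarith

theorem stochastic_combined_condition_general (γ : ℝ) (hγ0 : 0 < γ) (hγ1 : γ < 1)
    (H : ℕ) (p q rmin rmax C : ℝ) (hq1 : q ≤ 1)
    (hqγ : q * γ ^ H > p)
    (hC : C > max (max ((rmax * (1 - q * γ ^ H) - (1 - p) * rmin) / (q * γ ^ H - p))
        ((rmax * (2 - q - γ ^ H) - (1 - p) * rmin) / (γ ^ H - p))) 0) :
    (-p * C + (1 - p) * rmin) / (1 - γ)
        > q * ((rmax * (1 - γ ^ H) - C * γ ^ H) / (1 - γ)) + (1 - q) * rmax / (1 - γ) ∧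
      (-p * C + (1 - p) * rmin) / (1 - γ)
        > (rmax * (1 - γ ^ H) - C * γ ^ H) / (1 - γ) + (1 - q) * rmax / (1 - γ) := by
  obtain ⟨⟨hα₁, hα₂⟩, -⟩ := (max_lt_iff.1 hC).imp_left max_lt_iff.1
  have hpγ : p < γ ^ H := hqγ.trans_le (mul_le_of_le_one_left (pow_pos hγ0 H).le hq1)
  exact ⟨safe_value_gt_mixed_of_penalty_gt hγ1 hqγ hα₁,
    safe_value_gt_unsafe_of_penalty_gt hγ1 hpγ hα₂⟩

/-- Stochastic extension, combined condition: if `C > max{α₁, α₂, 0}`, then both inequalities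
ensuring that a `p`-safe action has larger penalized Q-value than a `p`-irrecoverable one
hold. -/
theorem stochastic_combined_condition (γ : ℝ) (hγ0 : 0 < γ) (hγ1 : γ < 1)
    (H : ℕ) (p q rmin rmax C : ℝ) (hp : 0 ≤ p) (hq0 : 0 ≤ q) (hq1 : q ≤ 1)
    (hqγ : q * γ ^ H > p)
    (hC : C > max (max ((rmax * (1 - q * γ ^ H) - (1 - p) * rmin) / (q * γ ^ H - p))
        ((rmax * (2 - q - γ ^ H) - (1 - p) * rmin) / (γ ^ H - p))) 0) :
    (-p * C + (1 - p) * rmin) / (1 - γ)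
        > q * ((rmax * (1 - γ ^ H) - C * γ ^ H) / (1 - γ)) + (1 - q) * rmax / (1 - γ) ∧
      (-p * C + (1 - p) * rmin) / (1 - γ)
        > (rmax * (1 - γ ^ H) - C * γ ^ H) / (1 - γ) + (1 - q) * rmax / (1 - γ) :=
  stochastic_combined_condition_general γ hγ0 hγ1 H p q rmin rmax C hq1 hqγ hC
end
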